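/- For the linear system Ẋ = AX in ℝ³, the flow curvature manifold {X : det(AX, A²X, A³X) = 0} is invariant under the flow, i.e., if det(AX₀, A²X₀, A³X₀) = 0 then det(Ae^{tA}X₀, A²e^{tA}X₀, A³e^{tA}X₀) = 0 for all t, in the case where A has a real eigenbasis. -/

import Mathlib

open Matrix

def flowCurvature {R : Type*} [CommRing R] (A : Matrix (Fin 3) (Fin 3) R) (X : Fin 3 → R) : R :=
  det (of ![A *ᵥ X, A *ᵥ A *ᵥ X, A *ᵥ A *ᵥ A *ᵥ X])ᵀ

theorem transpose_of_mulVec {m n R : Type*} [Fintype n] [NonUnitalNonAssocSemiring R]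
    (M : Matrix n n R) (v : m → n → R) :
    (of fun i ↦ M *ᵥ v i)ᵀ = M * (of v)ᵀ := by
  ext j i
  simp [mul_apply, mulVec, dotProduct]

theorem flowCurvature_mulVec_of_commute {R : Type*} [CommRing R]
    {A M : Matrix (Fin 3) (Fin 3) R} (hAM : Commute A M) (X : Fin 3 → R) :
    flowCurvature A (M *ᵥ X) = det M * flowCurvature A X := by
  have hmul : ∀ Y, A *ᵥ M *ᵥ Y = M *ᵥ A *ᵥ Y := fun Y ↦ by
    rw [mulVec_mulVec, mulVec_mulVec, hAM.eq]
  have hcols : ![A *ᵥ M *ᵥ X, A *ᵥ A *ᵥ M *ᵥ X, A *ᵥ A *ᵥ A *ᵥ M *ᵥ X] =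
      fun i ↦ M *ᵥ ![A *ᵥ X, A *ᵥ A *ᵥ X, A *ᵥ A *ᵥ A *ᵥ X] i := by
    ext i : 1
    fin_cases i <;> simp only [hmul] <;> rfl
  rw [flowCurvature, flowCurvature, hcols, transpose_of_mulVec, det_mul]

theorem stmt_17_general (A : Matrix (Fin 3) (Fin 3) ℝ)
    (X₀ : Fin 3 → ℝ)
    (h0 : Matrix.det (Matrix.of
        ![A.mulVec X₀, A.mulVec (A.mulVec X₀), A.mulVec (A.mulVec (A.mulVec X₀))])ᵀ = 0) :
    ∀ t : ℝ,
      Matrix.det (Matrix.of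
          ![A.mulVec ((NormedSpace.exp (t • A)).mulVec X₀),
            A.mulVec (A.mulVec ((NormedSpace.exp (t • A)).mulVec X₀)),
            A.mulVec (A.mulVec (A.mulVec ((NormedSpace.exp (t • A)).mulVec X₀)))])ᵀ = 0 := by
  intro t
  have hcomm : Commute A (NormedSpace.exp (t • A)) :=
    ((Commute.refl A).smul_right t).exp_right
  change flowCurvature A _ = 0
  rw [flowCurvature_mulVec_of_commute hcomm, show flowCurvature A X₀ = 0 from h0, mul_zero]

/-- For the linear system `Ẋ = AX` in `ℝ³` with `A` having a real eigenbasis, the flow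
curvature manifold `{X : det(AX, A²X, A³X) = 0}` is invariant under the flow
`X₀ ↦ e^{tA} X₀`. -/
theorem stmt_17 (A : Matrix (Fin 3) (Fin 3) ℝ)
    (hbasis : ∃ b : Module.Basis (Fin 3) ℝ (Fin 3 → ℝ), ∀ i, ∃ μ : ℝ, A.mulVec (b i) = μ • b i)
    (X₀ : Fin 3 → ℝ)
    (h0 : Matrix.det (Matrix.of
        ![A.mulVec X₀, A.mulVec (A.mulVec X₀), A.mulVec (A.mulVec (A.mulVec X₀))])ᵀ = 0) :
    ∀ t : ℝ,
      Matrix.det (Matrix.of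
          ![A.mulVec ((NormedSpace.exp (t • A)).mulVec X₀),
            A.mulVec (A.mulVec ((NormedSpace.exp (t • A)).mulVec X₀)),
            A.mulVec (A.mulVec (A.mulVec ((NormedSpace.exp (t • A)).mulVec X₀)))])ᵀ = 0 :=
  stmt_17_general A X₀ h0
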